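/- For every ε > 0 and d ≥ 2, the kernel K(q, k) = (⟨q,k⟩)²/((2+ε) - 2⟨q,k⟩) is positive semidefinite on the unit sphere S^{d-1}. -/

import Mathlib

def IsPSDKernel {X : Type*} (k : X → X → ℝ) : Prop :=
  ∀ (n : ℕ) (x : Fin n → X) (c : Fin n → ℝ),
    0 ≤ ∑ i, ∑ j, c i * c j * k (x i) (x j)

/-! For `|t| ≤ 1` and `C = 2 + ε > 2` the geometric series gives
`t ^ 2 / (C - 2 * t) = ∑ₘ 2 ^ m / C ^ (m + 1) * t ^ (m + 2)`, a series with nonnegative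
coefficients. Each kernel `⟪q, k⟫ ^ m` is positive semidefinite, its matrices being Hadamard
powers of Gram matrices (Schur product theorem), and positive semidefiniteness survives
nonnegative scaling and pointwise limits. -/

open Matrix

open scoped InnerProductSpace

theorem Matrix.posSemidef_inner_pow {ι E : Type*} [Finite ι] [SeminormedAddCommGroup E]
    [InnerProductSpace ℝ E] (v : ι → E) (m : ℕ) :
    (of fun i j => ⟪v i, v j⟫_ℝ ^ m).PosSemidef := by
  induction m with
  | zero => simpa [vecMulVec] using posSemidef_vecMulVec_self_star (fun _ : ι => (1 : ℝ))
  | succ m ih =>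
    simpa [hadamard, pow_succ] using ih.hadamard (posSemidef_gram ℝ v)

namespace IsPSDKernel

variable {X : Type*}

theorem of_posSemidef {k : X → X → ℝ}
    (hk : ∀ (n : ℕ) (x : Fin n → X), (of fun i j => k (x i) (x j)).PosSemidef) :
    IsPSDKernel k := by
  intro n x c
  refine ((hk n x).dotProduct_mulVec_nonneg c).trans_eq ?_
  simp only [dotProduct, mulVec, Finset.mul_sum, star_trivial, of_apply]
  exact Finset.sum_congr rfl fun i _ => Finset.sum_congr rfl fun j _ => by ring

theorem comp {Y : Type*} {k : X → X → ℝ} (hk : IsPSDKernel k) (f : Y → X) :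
    IsPSDKernel fun y y' => k (f y) (f y') :=
  fun n x c => hk n (f ∘ x) c

theorem const_mul {k : X → X → ℝ} (hk : IsPSDKernel k) {a : ℝ} (ha : 0 ≤ a) :
    IsPSDKernel fun x y => a * k x y := by
  intro n x c
  simpa only [Finset.mul_sum, mul_left_comm a] using mul_nonneg ha (hk n x c)

theorem of_hasSum {k : ℕ → X → X → ℝ} {K : X → X → ℝ} (hk : ∀ m, IsPSDKernel (k m))
    (hK : ∀ x y, HasSum (fun m => k m x y) (K x y)) : IsPSDKernel K := by
  intro n x c
  have hsum : HasSum (fun m => ∑ i, ∑ j, c i * c j * k m (x i) (x j))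
      (∑ i, ∑ j, c i * c j * K (x i) (x j)) :=
    hasSum_sum fun i _ => hasSum_sum fun j _ => (hK (x i) (x j)).mul_left _
  exact hsum.nonneg fun m => hk m n x c

end IsPSDKernel

theorem isPSDKernel_inner_pow (E : Type*) [SeminormedAddCommGroup E] [InnerProductSpace ℝ E]
    (m : ℕ) : IsPSDKernel fun x y : E => ⟪x, y⟫_ℝ ^ m :=
  .of_posSemidef fun _ x => posSemidef_inner_pow x m

theorem hasSum_sq_div_sub_mul {a t C : ℝ} (h : |a * t| < C) :
    HasSum (fun m : ℕ => a ^ m / C ^ (m + 1) * t ^ (m + 2)) (t ^ 2 / (C - a * t)) := by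
  have hC : 0 < C := (abs_nonneg _).trans_lt h
  have hr : |a * t / C| < 1 := by rwa [abs_div, abs_of_pos hC, div_lt_one hC]
  have hne : C - a * t ≠ 0 := by linarith [le_abs_self (a * t)]
  have hterm (m : ℕ) : t ^ 2 / C * (a * t / C) ^ m = a ^ m / C ^ (m + 1) * t ^ (m + 2) := by
    rw [div_pow, mul_pow]
    field_simp
    ring
  have hlim : t ^ 2 / C * (1 - a * t / C)⁻¹ = t ^ 2 / (C - a * t) := by
    field_simp
  rw [← hlim]
  exact ((hasSum_geometric_of_abs_lt_one hr).mul_left _).congr_fun fun m => (hterm m).symm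

theorem psd_spherical_E_product_general (d : ℕ) (ε : ℝ) (hε : 0 < ε) :
    IsPSDKernel (fun q k : Metric.sphere (0 : EuclideanSpace ℝ (Fin d)) 1 =>
      (inner ℝ (q : EuclideanSpace ℝ (Fin d)) (k : EuclideanSpace ℝ (Fin d)) : ℝ) ^ 2 /
        ((2 + ε) -
          2 * (inner ℝ (q : EuclideanSpace ℝ (Fin d)) (k : EuclideanSpace ℝ (Fin d)) : ℝ))) := by
  apply IsPSDKernel.of_hasSum (k := fun m (q k : Metric.sphere (0 : EuclideanSpace ℝ (Fin d)) 1) =>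
    2 ^ m / (2 + ε) ^ (m + 1) * ⟪(q : EuclideanSpace ℝ (Fin d)), k⟫_ℝ ^ (m + 2))
  · intro m
    exact ((isPSDKernel_inner_pow _ (m + 2)).comp Subtype.val).const_mul (by positivity)
  · intro q k
    refine hasSum_sq_div_sub_mul ?_
    have hqk : |⟪(q : EuclideanSpace ℝ (Fin d)), k⟫_ℝ| ≤ 1 :=
      (abs_real_inner_le_norm _ _).trans (by simp)
    rw [abs_mul, abs_two]
    linarith

theorem psd_spherical_E_product (d : ℕ) (hd : 2 ≤ d) (ε : ℝ) (hε : 0 < ε) :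
    IsPSDKernel (fun q k : Metric.sphere (0 : EuclideanSpace ℝ (Fin d)) 1 =>
      (inner ℝ (q : EuclideanSpace ℝ (Fin d)) (k : EuclideanSpace ℝ (Fin d)) : ℝ) ^ 2 /
        ((2 + ε) -
          2 * (inner ℝ (q : EuclideanSpace ℝ (Fin d)) (k : EuclideanSpace ℝ (Fin d)) : ℝ))) :=
  psd_spherical_E_product_general d ε hε
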